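/- With the Bell pair (𝒜, ℬ) generated by A₁ = ½⁻¹ᐟ²(λ₄+λ₁₁), A₂ = ½⁻¹ᐟ²(λ₁₀−λ₁₂), A₃ = −½(λ₁+λ₃−λ₁₃+λ₁₅) and B₁ = ½⁻¹ᐟ²(λ₇+λ₉), B₂ = −½⁻¹ᐟ²(λ₅+λ₈), B₃ = ½(λ₁−λ₃−λ₁₃−λ₁₅), the correlation matrices of the canonical basis vector states e₁ and e₂ of ℂ⁴ are zero, while the correlation matrices of e₃ and e₄ are diag(1,1,−1) and diag(−1,−1,−1) respectively; in particular e₃ and e₄ have total correlation 1. -/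

import Mathlib

open Matrix Kronecker ComplexOrder

noncomputable def σp : Fin 3 → Matrix (Fin 2) (Fin 2) ℂ
  | 0 => !![0, 1; 1, 0]
  | 1 => !![0, -Complex.I; Complex.I, 0]
  | 2 => !![1, 0; 0, -1]

noncomputable def kr (A B : Matrix (Fin 2) (Fin 2) ℂ) : Matrix (Fin 4) (Fin 4) ℂ :=
  Matrix.reindex finProdFinEquiv finProdFinEquiv (A ⊗ₖ B)

noncomputable def lam : ℕ → Matrix (Fin 4) (Fin 4) ℂ
  | 1 => kr 1 (σp 0)
  | 2 => kr 1 (σp 1)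
  | 3 => kr 1 (σp 2)
  | 4 => kr (σp 0) 1
  | 5 => kr (σp 1) 1
  | 6 => kr (σp 2) 1
  | 7 => kr (σp 0) (σp 0)
  | 8 => kr (σp 0) (σp 1)
  | 9 => kr (σp 0) (σp 2)
  | 10 => kr (σp 1) (σp 0)
  | 11 => kr (σp 1) (σp 1)
  | 12 => kr (σp 1) (σp 2)
  | 13 => kr (σp 2) (σp 0)
  | 14 => kr (σp 2) (σp 1)
  | 15 => kr (σp 2) (σp 2)
  | _ => 0

noncomputable def vecState (Ψ : Fin 4 → ℂ) (X : Matrix (Fin 4) (Fin 4) ℂ) : ℂ :=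
  star Ψ ⬝ᵥ (X *ᵥ Ψ)

noncomputable def opNorm (Q : Matrix (Fin 3) (Fin 3) ℝ) : ℝ :=
  ‖(Matrix.toEuclideanLin Q).toContinuousLinearMap‖

noncomputable def corrMat (ω : Matrix (Fin 4) (Fin 4) ℂ → ℂ)
    (A B : Fin 3 → Matrix (Fin 4) (Fin 4) ℂ) : Matrix (Fin 3) (Fin 3) ℝ :=
  Matrix.of fun i j => (ω (A i * B j) - ω (A i) * ω (B j)).re

/-- The primed Bell pair generators `A'₁, A'₂, A'₃`. -/
noncomputable def Ap : Fin 3 → Matrix (Fin 4) (Fin 4) ℂ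
  | 0 => -((1 / 2 : ℂ) • (lam 3 - lam 6 - lam 7 + lam 11))
  | 1 => -lam 10
  | 2 => -((1 / 2 : ℂ) • (lam 3 + lam 6 - lam 7 - lam 11))

/-- The primed Bell pair generators `B'₁, B'₂, B'₃`. -/
noncomputable def Bp : Fin 3 → Matrix (Fin 4) (Fin 4) ℂ
  | 0 => ((Real.sqrt 2 : ℂ))⁻¹ • (lam 1 - lam 9)
  | 1 => -((Real.sqrt 2 : ℂ))⁻¹ • (lam 5 - lam 14)
  | 2 => lam 15

/-- The non-canonical Bell pair generators `A₁, A₂, A₃` of Eq. (17). -/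
noncomputable def An : Fin 3 → Matrix (Fin 4) (Fin 4) ℂ
  | 0 => ((Real.sqrt 2 : ℂ))⁻¹ • (lam 4 + lam 11)
  | 1 => ((Real.sqrt 2 : ℂ))⁻¹ • (lam 10 - lam 12)
  | 2 => -((1 / 2 : ℂ) • (lam 1 + lam 3 - lam 13 + lam 15))

/-- The non-canonical Bell pair generators `B₁, B₂, B₃` of Eq. (17). -/
noncomputable def Bn : Fin 3 → Matrix (Fin 4) (Fin 4) ℂ
  | 0 => ((Real.sqrt 2 : ℂ))⁻¹ • (lam 7 + lam 9)
  | 1 => -((Real.sqrt 2 : ℂ))⁻¹ • (lam 5 + lam 8)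
  | 2 => (1 / 2 : ℂ) • (lam 1 - lam 3 - lam 13 - lam 15)

/-
In the vector state of a basis vector `eₖ`, `ω(X)` is the diagonal entry `X k k`, so every
correlation matrix is a finite computation with the explicit matrices of the generators;
`A₁, A₂, B₁, B₂` exchange the blocks `span {e₁, e₂}` and `span {e₃, e₄}`, so their expectations
vanish. The two nonzero correlation matrices are diagonal, and the operator norm of a diagonal
matrix is the sup norm of its diagonal.
-/

theorem kr_eq (A B : Matrix (Fin 2) (Fin 2) ℂ) :
    kr A B = !![A 0 0 * B 0 0, A 0 0 * B 0 1, A 0 1 * B 0 0, A 0 1 * B 0 1;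
                A 0 0 * B 1 0, A 0 0 * B 1 1, A 0 1 * B 1 0, A 0 1 * B 1 1;
                A 1 0 * B 0 0, A 1 0 * B 0 1, A 1 1 * B 0 0, A 1 1 * B 0 1;
                A 1 0 * B 1 0, A 1 0 * B 1 1, A 1 1 * B 1 0, A 1 1 * B 1 1] := by
  ext i j
  fin_cases i <;> fin_cases j <;> rfl

theorem An_zero :
    An 0 = (Real.sqrt 2 : ℂ)⁻¹ • !![0, 0, 1, -1; 0, 0, 1, 1; 1, 1, 0, 0; -1, 1, 0, 0] := by
  simp [An, lam, kr_eq, σp]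

theorem An_one :
    An 1 = (Real.sqrt 2 : ℂ)⁻¹ • !![0, 0, Complex.I, -Complex.I; 0, 0, -Complex.I, -Complex.I;
      -Complex.I, Complex.I, 0, 0; Complex.I, Complex.I, 0, 0] := by
  simp [An, lam, kr_eq, σp, ← Matrix.cons_zero_zero]

theorem An_two : An 2 = !![-1, 0, 0, 0; 0, 1, 0, 0; 0, 0, 0, -1; 0, 0, -1, 0] := by
  simp [An, lam, kr_eq, σp]
  norm_num

theorem Bn_zero :
    Bn 0 = (Real.sqrt 2 : ℂ)⁻¹ • !![0, 0, 1, 1; 0, 0, 1, -1; 1, 1, 0, 0; 1, -1, 0, 0] := by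
  simp [Bn, lam, kr_eq, σp]

theorem Bn_one :
    Bn 1 = (Real.sqrt 2 : ℂ)⁻¹ • !![0, 0, Complex.I, Complex.I; 0, 0, -Complex.I, Complex.I;
      -Complex.I, Complex.I, 0, 0; -Complex.I, -Complex.I, 0, 0] := by
  simp [Bn, lam, kr_eq, σp]

theorem Bn_two : Bn 2 = !![-1, 0, 0, 0; 0, 1, 0, 0; 0, 0, 0, 1; 0, 0, 1, 0] := by
  simp [Bn, lam, kr_eq, σp, ← Matrix.cons_zero_zero]
  norm_num

theorem vecState_single (k : Fin 4) (X : Matrix (Fin 4) (Fin 4) ℂ) :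
    vecState (Pi.single k 1) X = X k k := by
  simp [vecState]

theorem corrMat_vecState_single (k : Fin 4) (A B : Fin 3 → Matrix (Fin 4) (Fin 4) ℂ) :
    corrMat (vecState (Pi.single k 1)) A B =
      of fun i j => ((A i * B j) k k - A i k k * B j k k).re := by
  simp only [corrMat, vecState_single]

theorem corrMat_An_Bn_single (k : Fin 4) :
    corrMat (vecState (Pi.single k 1)) An Bn =
      diagonal (![![0, 0, 0], ![0, 0, 0], ![1, 1, -1], ![-1, -1, -1]] k) := by
  rw [corrMat_vecState_single]
  ext i j
  fin_cases k <;> fin_cases i <;> fin_cases j <;>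
    simp [An_zero, An_one, An_two, Bn_zero, Bn_one, Bn_two, mul_apply, Fin.sum_univ_four] <;>
    norm_num [div_mul_div_comm]

open scoped Matrix.Norms.L2Operator in
theorem opNorm_diagonal (v : Fin 3 → ℝ) : opNorm (diagonal v) = ‖v‖ :=
  l2_opNorm_diagonal v

theorem stmt_7 :
    corrMat (vecState ![1, 0, 0, 0]) An Bn = 0 ∧
    corrMat (vecState ![0, 1, 0, 0]) An Bn = 0 ∧
    corrMat (vecState ![0, 0, 1, 0]) An Bn = Matrix.diagonal ![1, 1, -1] ∧
    corrMat (vecState ![0, 0, 0, 1]) An Bn = Matrix.diagonal ![-1, -1, -1] ∧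
    opNorm (corrMat (vecState ![0, 0, 1, 0]) An Bn) = 1 ∧
    opNorm (corrMat (vecState ![0, 0, 0, 1]) An Bn) = 1 := by
  obtain ⟨e₁, e₂, e₃, e₄⟩ : (![1, 0, 0, 0] : Fin 4 → ℂ) = Pi.single 0 1 ∧
      (![0, 1, 0, 0] : Fin 4 → ℂ) = Pi.single 1 1 ∧
      (![0, 0, 1, 0] : Fin 4 → ℂ) = Pi.single 2 1 ∧
      (![0, 0, 0, 1] : Fin 4 → ℂ) = Pi.single 3 1 := by
    refine ⟨?_, ?_, ?_, ?_⟩ <;> ext i <;> fin_cases i <;> rfl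
  simp only [e₁, e₂, e₃, e₄, corrMat_An_Bn_single, opNorm_diagonal]
  simp [Pi.norm_def, Fin.univ_succ]
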